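/- Two consistent queryless schedules S₁ and S₂ over the same set of transactions are equivalent if and only if they have the same set of basic input trees, i.e., if and only if N^min_I(S₁) = N^min_I(S₂), N^max_I(S₁) = N^max_I(S₂), E^min_I(S₁) = E^min_I(S₂), and E^max_I(S₁) = E^max_I(S₂). -/

import Mathlib

attribute [local instance] Classical.propDecidable

/-! ## Data model: nodes, labels, edges, document trees -/

abbrev Node := ℕ
abbrev Label := ℕ
abbrev Edge := Node × Label × Node

/-- A candidate document tree: a finite node set, a finite edge set, a root. -/
structure Tree3 where
  N : Finset Node
  E : Finset Edge
  root : Node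

/-- The edge-step relation of a set of labelled edges. -/
def estep (E : Set Edge) (a b : Node) : Prop := ∃ l : Label, (a, l, b) ∈ E

/-- `T` is a document tree: the root is a node, edges connect nodes, every node has at
most one incoming edge, the root has none, and every node is reachable from the root
(edges are directed from parent to child). -/
def IsDT (T : Tree3) : Prop :=
  T.root ∈ T.N ∧
  (∀ e ∈ T.E, e.1 ∈ T.N ∧ e.2.2 ∈ T.N) ∧
  (∀ e ∈ T.E, ∀ e' ∈ T.E, e.2.2 = e'.2.2 → e = e') ∧
  (∀ e ∈ T.E, e.2.2 ≠ T.root) ∧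
  (∀ n ∈ T.N, Relation.ReflTransGen (estep (↑T.E)) T.root n)

/-! ## Update operations and queryless schedules -/

inductive Op where
  | add : Node → Label → Node → Op
  | del : Node → Label → Node → Op
deriving DecidableEq

/-- Apply an update operation to a tree; `none` when the operation is undefined. -/
noncomputable def applyOp (o : Op) (T : Tree3) : Option Tree3 :=
  match o with
  | Op.add m l n =>
      let T' : Tree3 := ⟨insert n T.N, insert (m, l, n) T.E, T.root⟩
      if (m, l, n) ∈ T.E ∨ ¬ IsDT T' then none else some T'
  | Op.del m l n =>
      let T' : Tree3 := ⟨T.N.erase n, T.E.erase (m, l, n), T.root⟩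
      if (m, l, n) ∉ T.E ∨ ¬ IsDT T' then none else some T'

/-- An action is an operation tagged with a transaction identifier. -/
abbrev QLAction := Op × ℕ

/-- A queryless (QL) schedule is a finite sequence of actions. -/
abbrev QLSchedule := List QLAction

/-- Apply a QL schedule to a tree, operation by operation. -/
noncomputable def applyQL : QLSchedule → Tree3 → Option Tree3
  | [], T => some T
  | a :: rest, T => (applyOp a.1 T).bind (applyQL rest)

/-- `S[T]` is defined (and `T` is a document tree). -/
def DefinedOn (S : QLSchedule) (T : Tree3) : Prop := IsDT T ∧ (applyQL S T).isSome

/-- A QL schedule is consistent iff it is defined on at least one document tree. -/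
def ConsistentQL (S : QLSchedule) : Prop := ∃ T, DefinedOn S T

def Op.src : Op → Node
  | Op.add m _ _ => m
  | Op.del m _ _ => m

def Op.tgt : Op → Node
  | Op.add _ _ n => n
  | Op.del _ _ n => n

def Op.edge : Op → Edge
  | Op.add m l n => (m, l, n)
  | Op.del m l n => (m, l, n)

/-- The list of operations of a QL schedule. -/
def ops (S : QLSchedule) : List Op := S.map Prod.fst

/-- The operation containing the first occurrence of the node `x` in `S`, if any. -/
def firstNodeOp (S : QLSchedule) (x : Node) : Option Op :=
  (ops S).find? (fun o => (o.src == x) || (o.tgt == x))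

/-- The operation containing the last occurrence of the node `x` in `S`, if any. -/
def lastNodeOp (S : QLSchedule) (x : Node) : Option Op :=
  (ops S).reverse.find? (fun o => (o.src == x) || (o.tgt == x))

/-- The operation containing the first occurrence of the edge `e` in `S`, if any. -/
def firstEdgeOp (S : QLSchedule) (e : Edge) : Option Op :=
  (ops S).find? (fun o => o.edge == e)

/-- The operation containing the last occurrence of the edge `e` in `S`, if any. -/
def lastEdgeOp (S : QLSchedule) (e : Edge) : Option Op :=
  (ops S).reverse.find? (fun o => o.edge == e)

/-- Some edge with target `x` occurs in `S`. -/
def occursTgt (S : QLSchedule) (x : Node) : Prop := ∃ o ∈ ops S, o.tgt = x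

/-- `N^min_I(S)`. -/
def NminI (S : QLSchedule) : Set Node :=
  {x | ∃ l n, firstNodeOp S x = some (Op.add x l n)} ∪
  {x | ∃ l n, firstNodeOp S x = some (Op.del x l n)} ∪
  {x | ∃ m l, firstNodeOp S x = some (Op.del m l x)}

/-- `N^max_I(S)`. -/
def NmaxI (S : QLSchedule) : Set Node :=
  {x | ¬ ∃ m l, firstNodeOp S x = some (Op.add m l x)}

/-- `E^min_I(S)`. -/
def EminI (S : QLSchedule) : Set Edge :=
  {e | firstEdgeOp S e = some (Op.del e.1 e.2.1 e.2.2)}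

/-- `E^max_I(S)`. -/
def EmaxI (S : QLSchedule) : Set Edge :=
  EminI S ∪ {e | ¬ occursTgt S e.1 ∧ ¬ occursTgt S e.2.2}

/-- `N^min_O(S)`. -/
def NminO (S : QLSchedule) : Set Node :=
  {x | ∃ l n, lastNodeOp S x = some (Op.del x l n)} ∪
  {x | ∃ l n, lastNodeOp S x = some (Op.add x l n)} ∪
  {x | ∃ m l, lastNodeOp S x = some (Op.add m l x)}

/-- `N^max_O(S)`. -/
def NmaxO (S : QLSchedule) : Set Node :=
  {x | ¬ ∃ m l, lastNodeOp S x = some (Op.del m l x)}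

/-- `E^min_O(S)`. -/
def EminO (S : QLSchedule) : Set Edge :=
  {e | lastEdgeOp S e = some (Op.add e.1 e.2.1 e.2.2)}

/-- `E^max_O(S)`. -/
def EmaxO (S : QLSchedule) : Set Edge :=
  EminO S ∪ {e | ¬ occursTgt S e.1 ∧ ¬ occursTgt S e.2.2}

/-- `ADD(S)`: edges whose last occurrence in `S` is an addition. -/
def ADDs (S : QLSchedule) : Set Edge :=
  {e | lastEdgeOp S e = some (Op.add e.1 e.2.1 e.2.2)}

/-- `DEL(S)`: edges whose last occurrence in `S` is a deletion. -/
def DELs (S : QLSchedule) : Set Edge :=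
  {e | lastEdgeOp S e = some (Op.del e.1 e.2.1 e.2.2)}

/-- `T` is a basic input tree of `S`. -/
def BasicInput (S : QLSchedule) (T : Tree3) : Prop :=
  IsDT T ∧ NminI S ⊆ ↑T.N ∧ ↑T.N ⊆ NmaxI S ∧ EminI S ⊆ ↑T.E ∧ ↑T.E ⊆ EmaxI S

/-- `T` is a basic output tree of `S`. -/
def BasicOutput (S : QLSchedule) (T : Tree3) : Prop :=
  IsDT T ∧ NminO S ⊆ ↑T.N ∧ ↑T.N ⊆ NmaxO S ∧ EminO S ⊆ ↑T.E ∧ ↑T.E ⊆ EmaxO S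

/-- The C-condition (nine clauses). -/
def CCond (S : QLSchedule) : Prop :=
  (∀ i j (n l₁ n₁ n₂ l₂ : ℕ), i < j →
      (ops S)[i]? = some (Op.add n l₁ n₁) → (ops S)[j]? = some (Op.add n₂ l₂ n) →
      ∃ k : ℕ, i < k ∧ k < j ∧ (ops S)[k]? = some (Op.del n l₁ n₁)) ∧
  (∀ i j (n₁ l₁ n n₂ l₂ : ℕ), i < j →
      (ops S)[i]? = some (Op.add n₁ l₁ n) → (ops S)[j]? = some (Op.add n₂ l₂ n) →
      ∃ k : ℕ, i < k ∧ k < j ∧ (ops S)[k]? = some (Op.del n₁ l₁ n)) ∧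
  (∀ i j (n l₁ n₁ n₂ l₂ : ℕ), i < j →
      (ops S)[i]? = some (Op.add n l₁ n₁) → (ops S)[j]? = some (Op.del n₂ l₂ n) →
      ∃ k : ℕ, i < k ∧ k < j ∧ (ops S)[k]? = some (Op.del n l₁ n₁)) ∧
  (∀ i j (n₁ l₁ n l₂ n₂ : ℕ), i < j →
      (ops S)[i]? = some (Op.add n₁ l₁ n) → (ops S)[j]? = some (Op.del n l₂ n₂) →
      ∃ k : ℕ, i < k ∧ k < j ∧ (ops S)[k]? = some (Op.add n l₂ n₂)) ∧
  (∀ i j (n₁ l₁ n n₂ l₂ : ℕ), i < j → (n₁, l₁) ≠ (n₂, l₂) →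
      (ops S)[i]? = some (Op.add n₁ l₁ n) → (ops S)[j]? = some (Op.del n₂ l₂ n) →
      ∃ k : ℕ, i < k ∧ k < j ∧ (ops S)[k]? = some (Op.del n₁ l₁ n)) ∧
  (∀ i j (n l₁ n₁ n₂ l₂ : ℕ), i < j →
      (ops S)[i]? = some (Op.del n l₁ n₁) → (ops S)[j]? = some (Op.add n₂ l₂ n) →
      ∃ k : ℕ, ∃ n₃ l₃ : ℕ, i < k ∧ k < j ∧ (ops S)[k]? = some (Op.del n₃ l₃ n)) ∧
  (∀ i j (n₁ l₁ n l₂ n₂ : ℕ), i < j →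
      (ops S)[i]? = some (Op.del n₁ l₁ n) → (ops S)[j]? = some (Op.add n l₂ n₂) →
      ∃ k : ℕ, ∃ n₃ l₃ : ℕ, i < k ∧ k < j ∧ (ops S)[k]? = some (Op.add n₃ l₃ n)) ∧
  (∀ i j (n₁ l₁ n l₂ n₂ : ℕ), i < j →
      (ops S)[i]? = some (Op.del n₁ l₁ n) → (ops S)[j]? = some (Op.del n l₂ n₂) →
      ∃ k : ℕ, ∃ n₃ l₃ : ℕ, i < k ∧ k < j ∧ (ops S)[k]? = some (Op.add n₃ l₃ n)) ∧
  (∀ i j (n₁ l₁ n n₂ l₂ : ℕ), i < j →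
      (ops S)[i]? = some (Op.del n₁ l₁ n) → (ops S)[j]? = some (Op.del n₂ l₂ n) →
      ∃ k : ℕ, i < k ∧ k < j ∧ (ops S)[k]? = some (Op.add n₂ l₂ n))

/-! ## Transactions, equivalence and serializability of QL schedules -/

/-- Two QL schedules are interleavings of the same set of transactions: for every
transaction identifier, the subsequences of actions with that identifier coincide. -/
def SameTrans (S S' : QLSchedule) : Prop :=
  ∀ t : ℕ, S.filter (fun a => a.2 == t) = S'.filter (fun a => a.2 == t)

/-- A schedule is serial iff the actions of each transaction occur consecutively. -/
def Serial (S : QLSchedule) : Prop :=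
  ∀ i j k : ℕ, i ≤ j → j ≤ k →
    ∀ a b c : QLAction, S[i]? = some a → S[j]? = some b → S[k]? = some c →
      a.2 = c.2 → b.2 = a.2

/-- Two QL schedules are equivalent: they are defined on the same non-empty set of
document trees and produce the same output tree on each of them. -/
def EquivQL (S S' : QLSchedule) : Prop :=
  (∃ T, DefinedOn S T) ∧ ∀ T, IsDT T → applyQL S T = applyQL S' T

/-- A QL schedule is serializable iff it is equivalent to a serial schedule over the
same set of transactions. -/
def SerializableQL (S : QLSchedule) : Prop :=
  ∃ S', Serial S' ∧ SameTrans S S' ∧ EquivQL S S'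

/-! ## Paths and forests -/

/-- `SPath G m lp n`: there is a directed path from `m` to `n` in the edge set `G`
whose label path is `lp`. -/
inductive SPath (G : Set Edge) : Node → List Label → Node → Prop where
  | nil (n : Node) : SPath G n [] n
  | cons {m n n' : Node} {l : Label} {lp : List Label} :
      (m, l, n) ∈ G → SPath G n lp n' → SPath G m (l :: lp) n'

/-- A set of edges is a forest: no two distinct edges share a target, and
there is no (non-trivial) directed cycle. -/
def IsForest (G : Set Edge) : Prop :=
  (∀ e ∈ G, ∀ e' ∈ G, e.2.2 = e'.2.2 → e = e') ∧
  ¬ ∃ (n : Node) (lp : List Label), lp ≠ [] ∧ SPath G n lp n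

/-! ## Path expressions -/

inductive Step where
  | star : Step
  | lab : Label → Step
deriving DecidableEq

/-- Path expressions: `ε`, `pe/f` and `pe//f` (a single step `f` is `ε/f`). -/
inductive PathExpr where
  | eps : PathExpr
  | child : PathExpr → Step → PathExpr
  | desc : PathExpr → Step → PathExpr
deriving DecidableEq

def Step.mtch : Step → Label → Prop
  | Step.star, _ => True
  | Step.lab l, l' => l = l'

def Step.mtchB : Step → Label → Bool
  | Step.star, _ => true
  | Step.lab l, l' => l == l'

/-- The set `L(pe)` of label paths represented by a path expression
(a label path is a list of labels). -/
def PathExpr.lang : PathExpr → Set (List Label)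
  | PathExpr.eps => {[]}
  | PathExpr.child pe f => {w | ∃ u l, u ∈ pe.lang ∧ f.mtch l ∧ w = u ++ [l]}
  | PathExpr.desc pe f => {w | ∃ u v l, u ∈ pe.lang ∧ f.mtch l ∧ w = u ++ v ++ [l]}

/-- `SOP` on a *reversed* label path. -/
def SOPr : PathExpr → List Label → Set PathExpr
  | pe, [] => {pe}
  | PathExpr.eps, _ :: _ => ∅
  | PathExpr.child pe f, l :: lp => if f.mtchB l then SOPr pe lp else ∅
  | PathExpr.desc pe f, l :: lp =>
      if f.mtchB l then SOPr pe lp ∪ SOPr (PathExpr.desc pe Step.star) lp else ∅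
termination_by pe lp => lp.length

/-- `SOP(pe)_lp`: the set of non-empty `lp`-prefixes of `pe`. -/
def SOP (pe : PathExpr) (lp : List Label) : Set PathExpr := SOPr pe lp.reverse

/-- `L(SOP(pe)_lp)`. -/
def LSOP (pe : PathExpr) (lp : List Label) : Set (List Label) :=
  ⋃ pe' ∈ SOP pe lp, pe'.lang

/-- `pe/lp`: append a label path to a path expression with `/` separators. -/
def PathExpr.appendLP : PathExpr → List Label → PathExpr
  | pe, [] => pe
  | pe, l :: lp => PathExpr.appendLP (PathExpr.child pe (Step.lab l)) lp

/-- The prefixes of a path expression (including `ε`). -/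
def PathExpr.prefixes : PathExpr → Set PathExpr
  | PathExpr.eps => {PathExpr.eps}
  | PathExpr.child pe f => insert (PathExpr.child pe f) pe.prefixes
  | PathExpr.desc pe f => insert (PathExpr.desc pe f) pe.prefixes

/-! ## Schedules with queries -/

inductive GOp where
  | query : Node → PathExpr → GOp
  | add : Node → Label → Node → GOp
  | del : Node → Label → Node → GOp

abbrev GAction := GOp × ℕ

/-- A (general) schedule is a finite sequence of query/add/del actions. -/
abbrev Schedule := List GAction

def GOp.toOp? : GOp → Option Op
  | GOp.query _ _ => none
  | GOp.add m l n => some (Op.add m l n)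
  | GOp.del m l n => some (Op.del m l n)

/-- The QL schedule of a schedule: remove all query actions. -/
def qlOf (S : Schedule) : QLSchedule :=
  S.filterMap (fun a => (a.1.toOp?).map (fun o => (o, a.2)))

/-- The answer of `query(n,pe)` on a tree `T`. -/
def queryAnswer (n : Node) (pe : PathExpr) (T : Tree3) : Set Node :=
  {n' | n' ∈ T.N ∧ ∃ lp, SPath (↑T.E) n lp n' ∧ lp ∈ pe.lang}

/-- A schedule is consistent iff its QL schedule is. -/
def ConsistentSched (S : Schedule) : Prop := ConsistentQL (qlOf S)

/-- Run a schedule on a tree: the final tree together with, for each query (in order),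
its transaction identifier and its answer; `none` if some update is undefined. -/
noncomputable def runQ : Schedule → Tree3 → Option (Tree3 × List (ℕ × Set Node))
  | [], T => some (T, [])
  | (GOp.query n pe, t) :: rest, T =>
      (runQ rest T).map (fun p => (p.1, (t, queryAnswer n pe T) :: p.2))
  | (GOp.add m l n, _) :: rest, T =>
      (applyOp (Op.add m l n) T).bind (runQ rest)
  | (GOp.del m l n, _) :: rest, T =>
      (applyOp (Op.del m l n) T).bind (runQ rest)

/-- Two schedules are equivalent: defined on the same non-empty set of document trees,
and on each such tree they produce the same output tree and, per transaction, the same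
sequence of query answers. -/
def EquivSched (S₁ S₂ : Schedule) : Prop :=
  (∃ T, IsDT T ∧ (runQ S₁ T).isSome) ∧
  ∀ T, IsDT T →
    ((runQ S₁ T).isSome ↔ (runQ S₂ T).isSome) ∧
    ∀ p₁ p₂, runQ S₁ T = some p₁ → runQ S₂ T = some p₂ →
      p₁.1 = p₂.1 ∧
      ∀ t : ℕ, (p₁.2.filter (fun x => x.1 == t)).map Prod.snd
             = (p₂.2.filter (fun x => x.1 == t)).map Prod.snd

/-- Two schedules are interleavings of the same set of transactions. -/
def SameTransG (S S' : Schedule) : Prop :=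
  ∀ t : ℕ, S.filter (fun a => a.2 == t) = S'.filter (fun a => a.2 == t)

/-- A schedule is serial iff the actions of each transaction occur consecutively. -/
def SerialG (S : Schedule) : Prop :=
  ∀ i j k : ℕ, i ≤ j → j ≤ k →
    ∀ a b c : GAction, S[i]? = some a → S[j]? = some b → S[k]? = some c →
      a.2 = c.2 → b.2 = a.2

/-- A schedule is serializable iff it is equivalent to a serial schedule over the same
set of transactions. -/
def SerializableSched (S : Schedule) : Prop :=
  ∃ S', SerialG S' ∧ SameTransG S S' ∧ EquivSched S S'

/-- `E^min(S^Q)` where `Q` is the action at position `i` of `S`. -/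
def EminSQ (S : Schedule) (i : ℕ) : Set Edge :=
  (EminI (qlOf S) \ DELs (qlOf (S.take i))) ∪ ADDs (qlOf (S.take i))

/-- `E^max(S^Q)` where `Q` is the action at position `i` of `S`. -/
def EmaxSQ (S : Schedule) (i : ℕ) : Set Edge :=
  (EmaxI (qlOf S) \ DELs (qlOf (S.take i))) ∪ ADDs (qlOf (S.take i))

/-- `x` is a non-building-node of `S`: some `add(m,l,x)` or `del(m,l,x)` occurs in `S`. -/
def NonBuilding (S : Schedule) (x : Node) : Prop :=
  ∃ a ∈ S, ∃ m l, a.1 = GOp.add m l x ∨ a.1 = GOp.del m l x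

/-- `x` is a node of the graph (edge set) `G`. -/
def NodeOfGraph (G : Set Edge) (x : Node) : Prop := ∃ e ∈ G, e.1 = x ∨ e.2.2 = x

/-- `x` has a parent in the edge set `G`. -/
def HasParent (G : Set Edge) (x : Node) : Prop := ∃ e ∈ G, e.2.2 = x

/-- `PQRN(S,Q)` for the query `Q = query(n,pe)` at position `i` of `S`:
the nodes `m` of the graph `E^min(S^Q)` that are non-building-nodes, whose root
ancestor `r` in the forest `E^min(S^Q)` (the node with no parent from which `m` is
reachable, via the label path `ALabel(S^Q,m)`) is a building-node different from `n`,
and such that `L(SOP(pe)_{ALabel(S^Q,m)}) ≠ ∅`. -/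
def PQRN (S : Schedule) (i : ℕ) (n : Node) (pe : PathExpr) : Set Node :=
  {m | NodeOfGraph (EminSQ S i) m ∧ NonBuilding S m ∧
       ∃ r lp, SPath (EminSQ S i) r lp m ∧ ¬ HasParent (EminSQ S i) r ∧
         ¬ NonBuilding S r ∧ r ≠ n ∧ LSOP pe lp ≠ ∅}

/-- The answer of the query at position `i` of `S` when `S` is applied to `T`
(the query is evaluated on the tree obtained by applying the actions before it). -/
noncomputable def answerAt (S : Schedule) (i : ℕ) (T : Tree3) : Option (Set Node) :=
  match S[i]? with
  | some (GOp.query n pe, _) => (applyQL (qlOf (S.take i)) T).map (queryAnswer n pe)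
  | _ => none

/-!
Every operation toggles the membership of its target node and of its edge, so wherever two
schedules with the same operations are both defined, they produce the same output tree. It
remains to see that a consistent schedule is defined exactly on its basic input trees. One
inclusion is an induction along the schedule; for the other, a tree on which the schedule is
defined tells, step by step, enough about the rest of the schedule to make the next operation
applicable to any basic input tree. Conversely, given a common input tree `T`, each of the four
sets is determined by `T` and by which nodes and edges occur in the schedule, and these
occurrences are the same for both schedules.
-/

namespace IsDT

variable {T : Tree3}

lemma mem_of_mem_edges (hT : IsDT T) {e : Edge} (he : e ∈ T.E) : e.1 ∈ T.N ∧ e.2.2 ∈ T.N :=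
  hT.2.1 e he

lemma loop_notMem (hT : IsDT T) (a : Node) (l : Label) : (a, l, a) ∉ T.E := by
  obtain ⟨-, hend, huniq, hroot, hreach⟩ := hT
  intro hloop
  -- the unique edge into `a` is the loop, so no path from the root reaches `a`
  suffices ∀ b, Relation.ReflTransGen (estep ↑T.E) T.root b → b ≠ a from
    this a (hreach a (hend _ hloop).2) rfl
  intro b hb
  induction hb with
  | refl => exact fun h => hroot _ hloop h.symm
  | tail _ hstep ih =>
    rintro rfl
    obtain ⟨l', hl'⟩ := hstep
    exact ih (congrArg Prod.fst (huniq _ hl' _ hloop rfl))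

lemma eq_root_of_forall_ne (hT : IsDT T) {n : Node} (hn : n ∈ T.N)
    (h : ∀ e ∈ T.E, e.2.2 ≠ n) : n = T.root := by
  rcases (hT.2.2.2.2 n hn).cases_tail with rfl | ⟨_, _, l, hl⟩
  · rfl
  · exact absurd rfl (h _ hl)

lemma insert_edge (hT : IsDT T) {m n : Node} (l : Label) (hm : m ∈ T.N) (hn : n ∉ T.N) :
    IsDT ⟨insert n T.N, insert (m, l, n) T.E, T.root⟩ := by
  obtain ⟨hr, hend, huniq, hroot, hreach⟩ := hT
  have hmono : estep ↑T.E ≤ estep ↑(insert (m, l, n) T.E) := fun a b ⟨l', hl'⟩ =>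
    ⟨l', Finset.mem_insert_of_mem hl'⟩
  have hfresh : ∀ e ∈ T.E, e.2.2 ≠ n := fun e he h => hn (h ▸ (hend e he).2)
  refine ⟨Finset.mem_insert_of_mem hr, ?_, ?_, ?_, ?_⟩ <;>
    simp only [Finset.mem_insert, forall_eq_or_imp]
  · exact ⟨⟨Or.inr hm, Or.inl trivial⟩,
      fun e he => ⟨Or.inr (hend e he).1, Or.inr (hend e he).2⟩⟩
  · exact ⟨⟨fun _ => trivial, fun e he h => absurd h.symm (hfresh e he)⟩,
      fun e he => ⟨fun h => absurd h (hfresh e he), huniq e he⟩⟩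
  · exact ⟨fun h => hn (h ▸ hr), hroot⟩
  · exact ⟨(Relation.ReflTransGen.mono hmono _ _ (hreach m hm)).tail
      ⟨l, Finset.mem_insert_self _ _⟩,
      fun x hx => Relation.ReflTransGen.mono hmono _ _ (hreach x hx)⟩

lemma erase_leaf (hT : IsDT T) {m n : Node} {l : Label} (he : (m, l, n) ∈ T.E)
    (hleaf : ∀ e ∈ T.E, e.1 ≠ n) :
    IsDT ⟨T.N.erase n, T.E.erase (m, l, n), T.root⟩ := by
  obtain ⟨hr, hend, huniq, hroot, hreach⟩ := hT
  have hn : n ≠ T.root := hroot _ he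
  refine ⟨Finset.mem_erase.2 ⟨hn.symm, hr⟩, fun e he' => ?_, fun e he' e' he'' =>
    huniq e (Finset.mem_of_mem_erase he') e' (Finset.mem_of_mem_erase he''),
    fun e he' => hroot e (Finset.mem_of_mem_erase he'), ?_⟩
  · obtain ⟨hne, he'⟩ := Finset.mem_erase.1 he'
    exact ⟨Finset.mem_erase.2 ⟨hleaf e he', (hend e he').1⟩,
      Finset.mem_erase.2 ⟨fun h => hne (huniq e he' _ he h), (hend e he').2⟩⟩
  · -- a path from the root that avoids the leaf `n` never uses the edge into `n`
    have hpath : ∀ x, Relation.ReflTransGen (estep ↑T.E) T.root x → x ≠ n →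
        Relation.ReflTransGen (estep ↑(T.E.erase (m, l, n))) T.root x := by
      intro x hx
      induction hx with
      | refl => exact fun _ => .refl
      | tail _ hstep ih =>
        obtain ⟨l', hl'⟩ := hstep
        refine fun hxn => (ih (hleaf _ hl')).tail ⟨l', Finset.mem_erase.2 ⟨?_, hl'⟩⟩
        exact fun h => hxn (congrArg (·.2.2) h)
    intro x hx
    obtain ⟨hxn, hx⟩ := Finset.mem_erase.1 hx
    exact hpath x (hreach x hx) hxn

end IsDT

section applyOp

variable {T T' : Tree3} {m n : Node} {l : Label}

lemma applyOp_add_of_isDT (hT : IsDT T) :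
    applyOp (.add m l n) T = if m ∈ T.N ∧ n ∉ T.N then
      some ⟨insert n T.N, insert (m, l, n) T.E, T.root⟩ else none := by
  simp only [applyOp]
  split_ifs with hundef hfresh hfresh
  · obtain ⟨hm, hn⟩ := hfresh
    refine absurd hundef (not_or.2 ⟨fun he => hn (hT.mem_of_mem_edges he).2, not_not.2 ?_⟩)
    exact hT.insert_edge l hm hn
  · rfl
  · rfl
  · obtain ⟨hnew, hT'⟩ := not_or.1 hundef
    rw [not_not] at hT'
    have hmn : m ≠ n := fun h => hT'.loop_notMem n l (h ▸ Finset.mem_insert_self _ _)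
    refine absurd ⟨?_, fun hn => ?_⟩ hfresh
    · simpa [hmn] using (hT'.mem_of_mem_edges (Finset.mem_insert_self _ _)).1
    · -- if `n` were already a node, the new edge would be its only parent edge: `n` is the root
      have hroot := hT.eq_root_of_forall_ne hn fun e he h =>
        hnew (hT'.2.2.1 e (Finset.mem_insert_of_mem he) _ (Finset.mem_insert_self _ _) h ▸ he)
      exact hT'.2.2.2.1 _ (Finset.mem_insert_self _ _) hroot

lemma applyOp_del_of_isDT (hT : IsDT T) :
    applyOp (.del m l n) T = if (m, l, n) ∈ T.E ∧ ∀ e ∈ T.E, e.1 ≠ n then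
      some ⟨T.N.erase n, T.E.erase (m, l, n), T.root⟩ else none := by
  simp only [applyOp]
  split_ifs with hundef hleaf hleaf
  · obtain ⟨he, hleaf⟩ := hleaf
    exact absurd hundef (not_or.2 ⟨not_not.2 he, not_not.2 (hT.erase_leaf he hleaf)⟩)
  · rfl
  · rfl
  · obtain ⟨he, hT'⟩ := not_or.1 hundef
    rw [not_not] at he hT'
    refine absurd ⟨he, fun e he' h => ?_⟩ hleaf
    have hne : e ≠ (m, l, n) := by
      rintro rfl
      exact hT.loop_notMem n l (h ▸ he)
    simpa [h] using (hT'.mem_of_mem_edges (Finset.mem_erase.2 ⟨hne, he'⟩)).1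

lemma isDT_of_applyOp_eq_some {o : Op} (h : applyOp o T = some T') : IsDT T' := by
  cases o <;>
  · simp only [applyOp] at h
    split_ifs at h with hundef
    cases h
    exact not_not.1 (not_or.1 hundef).2

end applyOp

lemma applyOp_toggle {T T' : Tree3} {o : Op} (hT : IsDT T) (h : applyOp o T = some T') :
    T'.root = T.root ∧ (∀ x, x ∈ T'.N ↔ (x ∈ T.N ↔ o.tgt ≠ x)) ∧
      ∀ e, e ∈ T'.E ↔ (e ∈ T.E ↔ o.edge ≠ e) := by
  cases o with
  | add m l n =>
    rw [applyOp_add_of_isDT hT] at h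
    split_ifs at h with hok
    cases h
    have hnew : (m, l, n) ∉ T.E := fun he => hok.2 (hT.mem_of_mem_edges he).2
    refine ⟨rfl, fun x => ?_, fun e => ?_⟩
    · by_cases hx : n = x
      · subst hx; simp [Op.tgt, hok.2]
      · simp [Op.tgt, hx, Ne.symm hx]
    · by_cases he : (m, l, n) = e
      · subst he; simp [Op.edge, hnew]
      · simp [Op.edge, he, Ne.symm he]
  | del m l n =>
    rw [applyOp_del_of_isDT hT] at h
    split_ifs at h with hok
    cases h
    have hn : n ∈ T.N := (hT.mem_of_mem_edges hok.1).2
    refine ⟨rfl, fun x => ?_, fun e => ?_⟩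
    · by_cases hx : n = x
      · subst hx; simp [Op.tgt, hn]
      · simp [Op.tgt, hx, Ne.symm hx]
    · by_cases he : (m, l, n) = e
      · subst he; simp [Op.edge, hok.1]
      · simp [Op.edge, he, Ne.symm he]

lemma ops_cons (a : QLAction) (S : QLSchedule) : ops (a :: S) = a.1 :: ops S := rfl

lemma applyQL_cons_eq_some {a : QLAction} {S : QLSchedule} {T T' : Tree3} :
    applyQL (a :: S) T = some T' ↔
      ∃ T₁, applyOp a.1 T = some T₁ ∧ applyQL S T₁ = some T' :=
  Option.bind_eq_some_iff

lemma iff_not_iff_even_add_ite (P b : Prop) [Decidable b] (k : ℕ) :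
    ((P ↔ ¬b) ↔ Even k) ↔ (P ↔ Even (k + if b then 1 else 0)) := by
  by_cases hb : b <;> simp only [hb, if_true, if_false, Nat.even_add_one, Nat.add_zero] <;> tauto

lemma applyQL_toggle {S : QLSchedule} {T T' : Tree3} (hT : IsDT T)
    (h : applyQL S T = some T') :
    T'.root = T.root ∧
      (∀ x, x ∈ T'.N ↔ (x ∈ T.N ↔ Even ((ops S).countP (fun o => o.tgt = x)))) ∧
      ∀ e, e ∈ T'.E ↔ (e ∈ T.E ↔ Even ((ops S).countP (fun o => o.edge = e))) := by
  induction S generalizing T with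
  | nil =>
    cases h
    simp [ops]
  | cons a S ih =>
    obtain ⟨T₁, h₁, h⟩ := applyQL_cons_eq_some.1 h
    obtain ⟨hr₁, hN₁, hE₁⟩ := applyOp_toggle hT h₁
    obtain ⟨hr, hN, hE⟩ := ih (isDT_of_applyOp_eq_some h₁) h
    refine ⟨hr.trans hr₁, fun x => ?_, fun e => ?_⟩
    · rw [hN, hN₁, ops_cons, List.countP_cons]
      simpa only [decide_eq_true_eq] using iff_not_iff_even_add_ite _ (a.1.tgt = x) _
    · rw [hE, hE₁, ops_cons, List.countP_cons]
      simpa only [decide_eq_true_eq] using iff_not_iff_even_add_ite _ (a.1.edge = e) _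

lemma applyQL_eq_of_perm {S₁ S₂ : QLSchedule} {T : Tree3} (hT : IsDT T)
    (hperm : (ops S₁).Perm (ops S₂))
    (hdef : (applyQL S₁ T).isSome ↔ (applyQL S₂ T).isSome) :
    applyQL S₁ T = applyQL S₂ T := by
  cases h₁ : applyQL S₁ T with
  | none => rw [h₁, Option.isSome_none, Bool.false_eq_true, false_iff,
      Option.not_isSome_iff_eq_none] at hdef; exact hdef.symm
  | some A =>
    obtain ⟨B, h₂⟩ := Option.isSome_iff_exists.1 (hdef.1 (by simp [h₁]))
    obtain ⟨hrA, hNA, hEA⟩ := applyQL_toggle hT h₁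
    obtain ⟨hrB, hNB, hEB⟩ := applyQL_toggle hT h₂
    obtain ⟨NA, EA, rA⟩ := A
    obtain ⟨NB, EB, rB⟩ := B
    rw [h₂, Option.some_inj, Tree3.mk.injEq]
    refine ⟨Finset.ext fun x => ?_, Finset.ext fun e => ?_, hrA.trans hrB.symm⟩
    · rw [hNA, hNB, hperm.countP_eq]
    · rw [hEA, hEB, hperm.countP_eq]

section firstOccurrence

variable {o : Op} {t : ℕ} {S : QLSchedule} {m n x : Node} {l : Label}

lemma firstNodeOp_cons :
    firstNodeOp ((o, t) :: S) x = if o.src = x ∨ o.tgt = x then some o else firstNodeOp S x := by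
  unfold firstNodeOp
  split_ifs with h
  · exact List.find?_cons_of_pos (by simpa using h)
  · exact List.find?_cons_of_neg (by simpa using h)

lemma firstEdgeOp_cons {e : Edge} :
    firstEdgeOp ((o, t) :: S) e = if o.edge = e then some o else firstEdgeOp S e := by
  unfold firstEdgeOp
  split_ifs with h
  · exact List.find?_cons_of_pos (by simpa using h)
  · exact List.find?_cons_of_neg (by simpa using h)

lemma occursTgt_cons {y : Node} : occursTgt ((o, t) :: S) y ↔ o.tgt = y ∨ occursTgt S y := by
  simp [occursTgt, ops_cons]

lemma NminI_cons_add : NminI ((.add m l n, t) :: S) = insert m (NminI S \ {n}) := by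
  ext x
  simp only [NminI, Set.mem_union, Set.mem_ofPred_eq, firstNodeOp_cons, Op.src, Op.tgt,
    Set.mem_insert_iff, Set.mem_sdiff, Set.mem_singleton_iff]
  by_cases hm : m = x <;> by_cases hn : n = x <;> simp [hm, hn] <;> grind

lemma NminI_cons_del : NminI ((.del m l n, t) :: S) = insert m (insert n (NminI S)) := by
  ext x
  simp only [NminI, Set.mem_union, Set.mem_ofPred_eq, firstNodeOp_cons, Op.src, Op.tgt,
    Set.mem_insert_iff]
  by_cases hm : m = x <;> by_cases hn : n = x <;> simp [hm, hn]
  grind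

lemma NmaxI_cons_add : NmaxI ((.add m l n, t) :: S) = insert m (NmaxI S) \ {n} := by
  ext x
  simp only [NmaxI, Set.mem_ofPred_eq, firstNodeOp_cons, Op.src, Op.tgt,
    Set.mem_insert_iff, Set.mem_sdiff, Set.mem_singleton_iff]
  by_cases hm : m = x <;> by_cases hn : n = x <;> simp [hm, hn] <;> grind

lemma NmaxI_cons_del : NmaxI ((.del m l n, t) :: S) = insert m (insert n (NmaxI S)) := by
  ext x
  simp only [NmaxI, Set.mem_ofPred_eq, firstNodeOp_cons, Op.src, Op.tgt, Set.mem_insert_iff]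
  by_cases hm : m = x <;> by_cases hn : n = x <;> simp [hm, hn]
  grind

lemma EminI_cons_add : EminI ((.add m l n, t) :: S) = EminI S \ {(m, l, n)} := by
  ext e
  simp only [EminI, Set.mem_ofPred_eq, firstEdgeOp_cons, Op.edge, Set.mem_sdiff,
    Set.mem_singleton_iff]
  by_cases he : (m, l, n) = e <;> simp [he]
  grind

lemma EminI_cons_del : EminI ((.del m l n, t) :: S) = insert (m, l, n) (EminI S) := by
  ext e
  simp only [EminI, Set.mem_ofPred_eq, firstEdgeOp_cons, Op.edge, Set.mem_insert_iff]
  by_cases he : (m, l, n) = e <;> simp [he] <;> grind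

end firstOccurrence

section basicInput

variable {T : Tree3} {S : QLSchedule} {t : ℕ} {m n : Node} {l : Label}

lemma mem_EmaxI_cons {o : Op} {e : Edge} : e ∈ EmaxI ((o, t) :: S) ↔
    e ∈ EminI ((o, t) :: S) ∨
      (o.tgt ≠ e.1 ∧ o.tgt ≠ e.2.2 ∧ ¬occursTgt S e.1 ∧ ¬occursTgt S e.2.2) := by
  simp only [EmaxI, Set.mem_union, Set.mem_ofPred_eq, occursTgt_cons, not_or, and_assoc]
  tauto

lemma basicInput_cons_add (hT : IsDT T) (hm : m ∈ T.N) (hn : n ∉ T.N)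
    (h : BasicInput S ⟨insert n T.N, insert (m, l, n) T.E, T.root⟩) :
    BasicInput ((.add m l n, t) :: S) T := by
  obtain ⟨-, hmin, hmax, hemin, hemax⟩ := h
  have hfresh : ∀ e ∈ T.E, n ≠ e.1 ∧ n ≠ e.2.2 := fun e he =>
    ⟨fun h => hn (h ▸ (hT.mem_of_mem_edges he).1),
      fun h => hn (h ▸ (hT.mem_of_mem_edges he).2)⟩
  refine ⟨hT, ?_, ?_, ?_, fun e he => ?_⟩
  · rw [NminI_cons_add]
    rintro x (rfl | ⟨hx, hxn⟩)
    · exact hm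
    · exact (Finset.mem_insert.1 (hmin hx)).resolve_left hxn
  · rw [NmaxI_cons_add]
    exact fun x hx => ⟨Or.inr (hmax (Finset.mem_insert_of_mem hx)), fun h => hn (h ▸ hx)⟩
  · rw [EminI_cons_add]
    exact fun e ⟨he, hne⟩ => (Finset.mem_insert.1 (hemin he)).resolve_left hne
  · rw [mem_EmaxI_cons, EminI_cons_add]
    rcases hemax (Finset.mem_insert_of_mem he) with hmin | ⟨h1, h2⟩
    · exact Or.inl ⟨hmin, fun h => (hfresh e he).2 (by rw [h])⟩
    · exact Or.inr ⟨(hfresh e he).1, (hfresh e he).2, h1, h2⟩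

lemma basicInput_cons_del (hT : IsDT T) (hmn : (m, l, n) ∈ T.E) (hleaf : ∀ e ∈ T.E, e.1 ≠ n)
    (h : BasicInput S ⟨T.N.erase n, T.E.erase (m, l, n), T.root⟩) :
    BasicInput ((.del m l n, t) :: S) T := by
  obtain ⟨-, hmin, hmax, hemin, hemax⟩ := h
  obtain ⟨hm, hn⟩ := hT.mem_of_mem_edges hmn
  refine ⟨hT, ?_, ?_, ?_, fun e he => ?_⟩
  · rw [NminI_cons_del]
    rintro x (rfl | rfl | hx)
    exacts [hm, hn, Finset.mem_of_mem_erase (hmin hx)]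
  · rw [NmaxI_cons_del]
    intro x hx
    by_cases hxn : x = n
    · exact Or.inr (Or.inl hxn)
    · exact Or.inr (Or.inr (hmax (Finset.mem_erase.2 ⟨hxn, hx⟩)))
  · rw [EminI_cons_del]
    rintro e (rfl | he)
    exacts [hmn, Finset.mem_of_mem_erase (hemin he)]
  · rw [mem_EmaxI_cons, EminI_cons_del]
    by_cases hne : e = (m, l, n)
    · exact Or.inl (Or.inl hne)
    rcases hemax (Finset.mem_erase.2 ⟨hne, he⟩) with hmin | ⟨h1, h2⟩
    · exact Or.inl (Or.inr hmin)
    · refine Or.inr ⟨fun h => hleaf e he h.symm, fun h => hne ?_, h1, h2⟩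
      exact hT.2.2.1 e he _ hmn h.symm

lemma basicInput_insert_of_cons_add (h : BasicInput ((.add m l n, t) :: S) T) (hm : m ∈ NmaxI S)
    (hn : n ∈ NmaxI S) (hmn : (m, l, n) ∈ EmaxI S) :
    m ∈ T.N ∧ n ∉ T.N ∧ BasicInput S ⟨insert n T.N, insert (m, l, n) T.E, T.root⟩ := by
  obtain ⟨hT, hmin, hmax, hemin, hemax⟩ := h
  rw [NminI_cons_add] at hmin
  rw [NmaxI_cons_add] at hmax
  rw [EminI_cons_add] at hemin
  have hmT : m ∈ T.N := hmin (Or.inl rfl)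
  have hnT : n ∉ T.N := fun h => (hmax h).2 rfl
  refine ⟨hmT, hnT, hT.insert_edge l hmT hnT, fun x hx => ?_, fun x hx => ?_, fun e he => ?_,
    fun e he => ?_⟩
  · by_cases hxn : x = n
    · exact hxn ▸ Finset.mem_insert_self _ _
    · exact Finset.mem_insert_of_mem (hmin (Or.inr ⟨hx, hxn⟩))
  · rcases Finset.mem_insert.1 hx with rfl | hx
    · exact hn
    · rcases (hmax hx).1 with rfl | hx
      exacts [hm, hx]
  · by_cases hne : e = (m, l, n)
    · exact hne ▸ Finset.mem_insert_self _ _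
    · exact Finset.mem_insert_of_mem (hemin ⟨he, hne⟩)
  · rcases Finset.mem_insert.1 he with rfl | he
    · exact hmn
    rcases mem_EmaxI_cons.1 (hemax he) with hmin | ⟨-, -, h1, h2⟩
    · rw [EminI_cons_add] at hmin
      exact Or.inl hmin.1
    · exact Or.inr ⟨h1, h2⟩

lemma basicInput_erase_of_cons_del (h : BasicInput ((.del m l n, t) :: S) T) (hm : m ∈ NmaxI S)
    (hn : n ∉ NminI S) (hmn : (m, l, n) ∉ EminI S) (hleaf : ∀ e ∈ EminI S, e.1 ≠ n) :
    (m, l, n) ∈ T.E ∧ (∀ e ∈ T.E, e.1 ≠ n) ∧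
      BasicInput S ⟨T.N.erase n, T.E.erase (m, l, n), T.root⟩ := by
  obtain ⟨hT, hmin, hmax, hemin, hemax⟩ := h
  rw [NminI_cons_del] at hmin
  rw [NmaxI_cons_del] at hmax
  rw [EminI_cons_del] at hemin
  have hmnT : (m, l, n) ∈ T.E := hemin (Or.inl rfl)
  have hleafT : ∀ e ∈ T.E, e.1 ≠ n := by
    intro e he he1
    rcases mem_EmaxI_cons.1 (hemax he) with hmin | ⟨hne, -⟩
    · rw [EminI_cons_del] at hmin
      rcases hmin with rfl | hmin
      · exact hT.loop_notMem n l (he1 ▸ he)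
      · exact hleaf e hmin he1
    · exact hne he1.symm
  refine ⟨hmnT, hleafT, hT.erase_leaf hmnT hleafT, fun x hx => ?_, fun x hx => ?_,
    fun e he => ?_, fun e he => ?_⟩
  · exact Finset.mem_erase.2 ⟨fun h => hn (h ▸ hx), hmin (Or.inr (Or.inr hx))⟩
  · obtain ⟨hxn, hx⟩ := Finset.mem_erase.1 hx
    rcases hmax hx with rfl | rfl | hx
    exacts [hm, absurd rfl hxn, hx]
  · exact Finset.mem_erase.2 ⟨fun h => hmn (h ▸ he), hemin (Or.inr he)⟩
  · obtain ⟨hne, he⟩ := Finset.mem_erase.1 he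
    rcases mem_EmaxI_cons.1 (hemax he) with hmin | ⟨-, -, h1, h2⟩
    · rw [EminI_cons_del] at hmin
      exact Or.inl (hmin.resolve_left hne)
    · exact Or.inr ⟨h1, h2⟩

end basicInput

section definedOn

variable {S : QLSchedule}

lemma definedOn_cons_iff {o : Op} {t : ℕ} {T : Tree3} :
    DefinedOn ((o, t) :: S) T ↔
      IsDT T ∧ ∃ T₁, applyOp o T = some T₁ ∧ DefinedOn S T₁ := by
  simp only [DefinedOn, applyQL]
  cases h : applyOp o T with
  | none => simp
  | some T₁ => simp [isDT_of_applyOp_eq_some h]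

lemma basicInput_nil {T : Tree3} (hT : IsDT T) : BasicInput [] T := by
  simp [BasicInput, hT, NminI, NmaxI, EminI, EmaxI, firstNodeOp, firstEdgeOp, occursTgt, ops]

lemma basicInput_of_definedOn {T : Tree3} (h : DefinedOn S T) : BasicInput S T := by
  induction S generalizing T with
  | nil => exact basicInput_nil h.1
  | cons a S ih =>
    obtain ⟨hT, T₁, happ, hdef⟩ := definedOn_cons_iff.1 h
    cases a with | mk o t => cases o with
    | add m l n =>
      rw [applyOp_add_of_isDT hT] at happ
      split_ifs at happ with hok
      cases happ
      exact basicInput_cons_add hT hok.1 hok.2 (ih hdef)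
    | del m l n =>
      rw [applyOp_del_of_isDT hT] at happ
      split_ifs at happ with hok
      cases happ
      exact basicInput_cons_del hT hok.1 hok.2 (ih hdef)

lemma definedOn_of_basicInput {T₀ T : Tree3} (h₀ : DefinedOn S T₀) (h : BasicInput S T) :
    DefinedOn S T := by
  induction S generalizing T₀ T with
  | nil => exact ⟨h.1, rfl⟩
  | cons a S ih =>
    obtain ⟨hT₀, T₁, happ, hdef⟩ := definedOn_cons_iff.1 h₀
    obtain ⟨-, hmin, hmax, hemin, hemax⟩ := basicInput_of_definedOn hdef
    cases a with | mk o t => cases o with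
    | add m l n =>
      rw [applyOp_add_of_isDT hT₀] at happ
      split_ifs at happ with hok
      cases happ
      obtain ⟨hm, hn, hb⟩ := basicInput_insert_of_cons_add h
        (hmax (Finset.mem_insert_of_mem hok.1)) (hmax (Finset.mem_insert_self _ _))
        (hemax (Finset.mem_insert_self _ _))
      refine definedOn_cons_iff.2 ⟨h.1, _, ?_, ih hdef hb⟩
      rw [applyOp_add_of_isDT h.1, if_pos ⟨hm, hn⟩]
    | del m l n =>
      rw [applyOp_del_of_isDT hT₀] at happ
      split_ifs at happ with hok
      cases happ
      have hmn : m ≠ n := fun h => hT₀.loop_notMem n l (h ▸ hok.1)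
      obtain ⟨he, hleaf, hb⟩ := basicInput_erase_of_cons_del h
        (hmax (Finset.mem_erase.2 ⟨hmn, (hT₀.mem_of_mem_edges hok.1).1⟩))
        (fun h => Finset.notMem_erase _ _ (hmin h))
        (fun h => Finset.notMem_erase _ _ (hemin h))
        (fun e h he => Finset.notMem_erase _ _ (he ▸ (hdef.1.mem_of_mem_edges (hemin h)).1))
      refine definedOn_cons_iff.2 ⟨h.1, _, ?_, ih hdef hb⟩
      rw [applyOp_del_of_isDT h.1, if_pos ⟨he, hleaf⟩]

theorem definedOn_iff_basicInput (hS : ConsistentQL S) {T : Tree3} :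
    DefinedOn S T ↔ BasicInput S T :=
  ⟨basicInput_of_definedOn, fun h => definedOn_of_basicInput hS.choose_spec h⟩

end definedOn

section occurrences

variable {S S₁ S₂ : QLSchedule}

lemma firstNodeOp_isSome_eq_of_perm (hperm : (ops S₁).Perm (ops S₂)) (x : Node) :
    (firstNodeOp S₁ x).isSome = (firstNodeOp S₂ x).isSome := by
  refine Bool.eq_iff_iff.2 ?_
  simp only [firstNodeOp, List.find?_isSome, hperm.mem_iff]

lemma firstEdgeOp_isSome_eq_of_perm (hperm : (ops S₁).Perm (ops S₂)) (e : Edge) :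
    (firstEdgeOp S₁ e).isSome = (firstEdgeOp S₂ e).isSome := by
  refine Bool.eq_iff_iff.2 ?_
  simp only [firstEdgeOp, List.find?_isSome, hperm.mem_iff]

lemma occursTgt_iff_of_perm (hperm : (ops S₁).Perm (ops S₂)) (y : Node) :
    occursTgt S₁ y ↔ occursTgt S₂ y := by
  simp only [occursTgt, hperm.mem_iff]

lemma mem_NminI_or_notMem_NmaxI {x : Node} (h : (firstNodeOp S x).isSome) :
    x ∈ NminI S ∨ x ∉ NmaxI S := by
  obtain ⟨o, ho⟩ := Option.isSome_iff_exists.1 h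
  have hx := List.find?_some ho
  cases o with
  | add m l n =>
    obtain rfl | rfl : m = x ∨ n = x := by simpa [Op.src, Op.tgt] using hx
    · exact Or.inl (Or.inl (Or.inl ⟨l, n, ho⟩))
    · exact Or.inr fun hmax => hmax ⟨m, l, ho⟩
  | del m l n =>
    obtain rfl | rfl : m = x ∨ n = x := by simpa [Op.src, Op.tgt] using hx
    · exact Or.inl (Or.inl (Or.inr ⟨l, n, ho⟩))
    · exact Or.inl (Or.inr ⟨m, l, ho⟩)

lemma firstNodeOp_isSome_of_mem_NminI {x : Node} (h : x ∈ NminI S) :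
    (firstNodeOp S x).isSome := by
  rcases h with (⟨l, n, h⟩ | ⟨l, n, h⟩) | ⟨m, l, h⟩ <;> simp [h]

lemma firstNodeOp_isSome_of_notMem_NmaxI {x : Node} (h : x ∉ NmaxI S) :
    (firstNodeOp S x).isSome := by
  obtain ⟨m, l, h⟩ := not_not.1 h
  simp [h]

variable {T : Tree3}

lemma NminI_eq_of_definedOn (h : DefinedOn S T) :
    NminI S = {x | (firstNodeOp S x).isSome ∧ x ∈ T.N} := by
  obtain ⟨-, hmin, hmax, -, -⟩ := basicInput_of_definedOn h
  ext x
  refine ⟨fun hx => ⟨firstNodeOp_isSome_of_mem_NminI hx, hmin hx⟩, fun ⟨hocc, hx⟩ => ?_⟩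
  exact (mem_NminI_or_notMem_NmaxI hocc).resolve_right (not_not.2 (hmax hx))

lemma NmaxI_eq_of_definedOn (h : DefinedOn S T) :
    NmaxI S = {x | (firstNodeOp S x).isSome → x ∈ T.N} := by
  obtain ⟨-, hmin, hmax, -, -⟩ := basicInput_of_definedOn h
  ext x
  refine ⟨fun hx hocc => hmin ((mem_NminI_or_notMem_NmaxI hocc).resolve_right (not_not.2 hx)),
    fun hx => ?_⟩
  by_contra hnot
  exact hnot (hmax (hx (firstNodeOp_isSome_of_notMem_NmaxI hnot)))

lemma EminI_eq_of_definedOn (h : DefinedOn S T) :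
    EminI S = {e | (firstEdgeOp S e).isSome ∧ e ∈ T.E} := by
  obtain ⟨-, -, -, hemin, hemax⟩ := basicInput_of_definedOn h
  ext e
  refine ⟨fun he => ⟨by simp [he.out], hemin he⟩, fun ⟨hocc, he⟩ => ?_⟩
  obtain ⟨o, ho⟩ := Option.isSome_iff_exists.1 hocc
  have hoe : o.edge = e := by simpa using List.find?_some ho
  cases o with
  | del m l n => subst hoe; exact ho
  | add m l n =>
    -- an edge first added by `S` has a target that `S` adds, so it lies outside `E^max_I(S)`
    subst hoe
    rcases hemax he with hmin | ⟨-, htgt⟩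
    · cases ho.symm.trans hmin
    · exact absurd ⟨_, List.mem_of_find?_eq_some ho, rfl⟩ htgt

lemma basicInputSets_eq_of_definedOn (hperm : (ops S₁).Perm (ops S₂)) (h₁ : DefinedOn S₁ T)
    (h₂ : DefinedOn S₂ T) :
    NminI S₁ = NminI S₂ ∧ NmaxI S₁ = NmaxI S₂ ∧
      EminI S₁ = EminI S₂ ∧ EmaxI S₁ = EmaxI S₂ := by
  have hEmin : EminI S₁ = EminI S₂ := by
    simp only [EminI_eq_of_definedOn h₁, EminI_eq_of_definedOn h₂,
      firstEdgeOp_isSome_eq_of_perm hperm]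
  refine ⟨?_, ?_, hEmin, ?_⟩
  · simp only [NminI_eq_of_definedOn h₁, NminI_eq_of_definedOn h₂,
      firstNodeOp_isSome_eq_of_perm hperm]
  · simp only [NmaxI_eq_of_definedOn h₁, NmaxI_eq_of_definedOn h₂,
      firstNodeOp_isSome_eq_of_perm hperm]
  · simp only [EmaxI, hEmin, occursTgt_iff_of_perm hperm]

end occurrences

lemma SameTrans.perm {S₁ S₂ : QLSchedule} (h : SameTrans S₁ S₂) : S₁.Perm S₂ :=
  List.perm_iff_count.2 fun a => by
    simpa [List.count_filter] using congrArg (List.count a) (h a.2)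

/-- Two consistent QL schedules over the same set of transactions are
equivalent iff they have the same set of basic input trees, i.e. iff their four basic
input sets coincide. -/
theorem equiv_iff_same_basic_input (S₁ S₂ : QLSchedule)
    (h₁ : ConsistentQL S₁) (h₂ : ConsistentQL S₂) (hsame : SameTrans S₁ S₂) :
    EquivQL S₁ S₂ ↔
      (NminI S₁ = NminI S₂ ∧ NmaxI S₁ = NmaxI S₂ ∧
       EminI S₁ = EminI S₂ ∧ EmaxI S₁ = EmaxI S₂) := by
  have hperm : (ops S₁).Perm (ops S₂) := hsame.perm.map Prod.fst
  constructor
  · rintro ⟨⟨T, hT⟩, heq⟩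
    exact basicInputSets_eq_of_definedOn hperm hT ⟨hT.1, heq T hT.1 ▸ hT.2⟩
  · rintro ⟨hNmin, hNmax, hEmin, hEmax⟩
    refine ⟨h₁, fun T hT => applyQL_eq_of_perm hT hperm ?_⟩
    have hdef : DefinedOn S₁ T ↔ DefinedOn S₂ T := by
      rw [definedOn_iff_basicInput h₁, definedOn_iff_basicInput h₂, BasicInput, BasicInput,
        hNmin, hNmax, hEmin, hEmax]
    simpa [DefinedOn, hT] using hdef
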